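/- For any r ≥ 1 and any integers q1,…,qm, the (q1,…,qm)-twisted state is an equilibrium of the m-dimensional lattice Kuramoto model with r-nearest neighbor coupling: for every lattice site x ∈ (ZMod L)ᵐ, the sum over all sites y of A(x,y)·sin(θ_y − θ_x) equals 0, where θ is the (q1,…,qm)-twisted state. -/
import Mathlib


noncomputable section
open Real Finset Matrix

/-- Toroidal squared distance on the `m`-dimensional lattice `(ZMod L)ᵐ`:
`d(x,y) = Σ_j min(|x_j−y_j|, L−|x_j−y_j|)²` with representatives in `{0,…,L−1}`. -/
def torDistM (L m : ℕ) (x y : Fin m → ZMod L) : ℕ :=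
  ∑ j, (min (((x j).val : ℤ) - ((y j).val : ℤ)).natAbs
      (L - (((x j).val : ℤ) - ((y j).val : ℤ)).natAbs)) ^ 2

/-- Adjacency with real coupling range `r`: `A(x,y) = 1` iff `0 < d(x,y) ≤ r²`, else `0`. -/
def adjRM (L m : ℕ) (r : ℝ) (x y : Fin m → ZMod L) : ℝ :=
  if 0 < torDistM L m x y ∧ (torDistM L m x y : ℝ) ≤ r ^ 2 then 1 else 0

/-- Adjacency with integer squared coupling range `r2`:
`A(x,y) = 1` iff `0 < d(x,y) ≤ r2`, else `0`. -/
def adjNM (L m r2 : ℕ) (x y : Fin m → ZMod L) : ℝ :=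
  if 0 < torDistM L m x y ∧ torDistM L m x y ≤ r2 then 1 else 0

/-- The `(q1,…,qm)`-twisted state `θ_x = Σ_j 2π q_j x_j / L + C`. -/
def twistedM (L m : ℕ) (q : Fin m → ℤ) (C : ℝ) (x : Fin m → ZMod L) : ℝ :=
  (∑ j, 2 * π * q j * (x j).val / L) + C

/-- Jacobian of the `m`-dimensional lattice Kuramoto model (real range `r`) at configuration `u`. -/
def jacRM (L m : ℕ) [NeZero L] (r : ℝ) (u : (Fin m → ZMod L) → ℝ) :
    Matrix (Fin m → ZMod L) (Fin m → ZMod L) ℝ :=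
  fun x y =>
    if x = y then -∑ z, adjRM L m r x z * Real.cos (u z - u x)
    else adjRM L m r x y * Real.cos (u y - u x)

/-- Jacobian of the `m`-dimensional lattice Kuramoto model (integer squared range `r2`) at
configuration `u`. -/
def jacNM (L m : ℕ) [NeZero L] (r2 : ℕ) (u : (Fin m → ZMod L) → ℝ) :
    Matrix (Fin m → ZMod L) (Fin m → ZMod L) ℝ :=
  fun x y =>
    if x = y then -∑ z, adjNM L m r2 x z * Real.cos (u z - u x)
    else adjNM L m r2 x y * Real.cos (u y - u x)

lemma tor_coord (L : ℕ) [NeZero L] (a b : ZMod L) :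
    min (((a.val : ℤ) - ((b.val : ℤ))).natAbs) (L - (((a.val : ℤ) - ((b.val : ℤ))).natAbs))
      = min ((a - b).val) ((b - a).val) := by
  have ha := ZMod.val_lt a
  have hb := ZMod.val_lt b
  rcases eq_or_ne a b with rfl | hne
  · simp
  · rcases le_or_gt b.val a.val with h | h
    · have h1 : (a - b).val = a.val - b.val := ZMod.val_sub h
      have hab : a - b ≠ 0 := sub_ne_zero.mpr hne
      have h2 : (b - a).val = L - (a - b).val := by
        rw [show b - a = -(a - b) by ring, ZMod.neg_val]
        simp [hab]
      omega
    · have h1 : (b - a).val = b.val - a.val := ZMod.val_sub h.le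
      have hab : b - a ≠ 0 := sub_ne_zero.mpr hne.symm
      have h2 : (a - b).val = L - (b - a).val := by
        rw [show a - b = -(b - a) by ring, ZMod.neg_val]
        simp [hab]
      omega

lemma torDistM_eq (L m : ℕ) [NeZero L] (x y : Fin m → ZMod L) :
    torDistM L m x y = ∑ j, (min ((x j - y j).val) ((y j - x j).val)) ^ 2 :=
  Finset.sum_congr rfl fun j _ => by rw [tor_coord]

lemma torDistM_reflect (L m : ℕ) [NeZero L] (x y : Fin m → ZMod L) :
    torDistM L m x (fun j => x j + (x j - y j)) = torDistM L m x y := by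
  rw [torDistM_eq, torDistM_eq]
  refine Finset.sum_congr rfl fun j _ => ?_
  rw [show x j - (x j + (x j - y j)) = y j - x j by ring,
    show (x j + (x j - y j)) - x j = x j - y j by ring, min_comm]

lemma twisted_reflect (L m : ℕ) [NeZero L] (q : Fin m → ℤ) (C : ℝ) (x y : Fin m → ZMod L) :
    Real.sin (twistedM L m q C (fun j => x j + (x j - y j)) - twistedM L m q C x)
      = - Real.sin (twistedM L m q C y - twistedM L m q C x) := by
  set σ : Fin m → ZMod L := fun j => x j + (x j - y j) with hσ
  have hk : ∀ j, ∃ k : ℤ, ((σ j).val : ℤ) = 2 * (x j).val - (y j).val + L * k := by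
    intro j
    set c : ℤ := ((σ j).val : ℤ) - (2 * (x j).val - (y j).val) with hc
    have hz : ((c : ZMod L)) = 0 := by
      rw [hc]
      push_cast
      simp only [ZMod.natCast_val, ZMod.cast_id]
      simp [hσ]
      ring
    obtain ⟨k, hk⟩ := (ZMod.intCast_zmod_eq_zero_iff_dvd c L).mp hz
    rw [hc] at hk
    exact ⟨k, by linarith [hk]⟩
  choose k hk using hk
  have hL : (L : ℝ) ≠ 0 := Nat.cast_ne_zero.mpr (NeZero.ne L)
  have key : (twistedM L m q C σ - twistedM L m q C x)
      = -(twistedM L m q C y - twistedM L m q C x) + ((∑ j, q j * k j : ℤ) : ℝ) * (2 * π) := by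
    have h1 : ∑ j, 2 * π * (q j : ℝ) * ((σ j).val : ℝ) / L
        = ∑ j, (2 * (2 * π * (q j : ℝ) * ((x j).val : ℝ) / L)
            - 2 * π * (q j : ℝ) * ((y j).val : ℝ) / L + ((q j * k j : ℤ) : ℝ) * (2 * π)) := by
      refine Finset.sum_congr rfl fun j _ => ?_
      have h' : ((σ j).val : ℝ) = 2 * ((x j).val : ℝ) - ((y j).val : ℝ) + (L : ℝ) * (k j : ℝ) := by
        exact_mod_cast hk j
      rw [h']
      push_cast
      field_simp
    simp only [twistedM]
    rw [h1, Finset.sum_add_distrib, Finset.sum_sub_distrib, ← Finset.mul_sum, ← Finset.sum_mul]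
    push_cast
    ring
  rw [key, Real.sin_add_int_mul_two_pi, Real.sin_neg]

/-- For any coupling range `r ≥ 1` and any integers `q1,…,qm`, the `(q1,…,qm)`-twisted state is an
equilibrium of the `m`-dimensional lattice Kuramoto model with `r`-nearest neighbor coupling. -/
theorem twisted_state_is_equilibrium_general_dim (L m : ℕ) [NeZero L] (hm : 1 ≤ m)
    (r : ℝ) (hr : 1 ≤ r) (q : Fin m → ℤ) (C : ℝ) (x : Fin m → ZMod L) :
    ∑ y : Fin m → ZMod L,
      adjRM L m r x y * Real.sin (twistedM L m q C y - twistedM L m q C x) = 0 := by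
  refine Finset.sum_ninvolution (fun y j => x j + (x j - y j)) ?_ ?_ (fun _ => Finset.mem_univ _)
    ?_
  · intro y
    have hadj : adjRM L m r x (fun j => x j + (x j - y j)) = adjRM L m r x y := by
      unfold adjRM
      rw [torDistM_reflect]
    rw [hadj, twisted_reflect]
    ring
  · intro y hy hcon
    apply hy
    have := twisted_reflect L m q C x y
    rw [show (fun j => x j + (x j - y j)) = y from hcon] at this
    have hs : Real.sin (twistedM L m q C y - twistedM L m q C x) = 0 := by linarith
    rw [hs, mul_zero]
  · intro y
    funext j
    simp only []
    ring
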